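/- Every ultrafilter on a finite level L_n with n ≥ 1 is either irreducible or a finite product of irreducible ultrafilters. -/
import Mathlib


/-- `L n` : positive naturals with exactly `n` prime factors counted with multiplicity. -/
def L (n : ℕ) : Set ℕ+ := {m : ℕ+ | (m : ℕ).primeFactorsList.length = n}

/-- Product of ultrafilters on `ℕ+`: `A ∈ umul x y ↔ {n | {m | n*m ∈ A} ∈ y} ∈ x`. -/
def umul (x y : Ultrafilter ℕ+) : Ultrafilter ℕ+ :=
  x.bind fun n => y.map fun m => n * m

/-- tilde-divisibility. -/
def tdvd (u v : Ultrafilter ℕ+) : Prop :=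
  ∀ A ∈ u, {m : ℕ+ | ∃ a ∈ A, a ∣ m} ∈ v

/-- irreducible ultrafilter. -/
def Irred (p : Ultrafilter ℕ+) : Prop :=
  p ≠ pure 1 ∧ ∀ x y : Ultrafilter ℕ+, p = umul x y → x = pure 1 ∨ y = pure 1

lemma mem_umul {x y : Ultrafilter ℕ+} {A : Set ℕ+} :
    A ∈ umul x y ↔ {a : ℕ+ | {b : ℕ+ | a * b ∈ A} ∈ y} ∈ x := by
  show A ∈ Filter.bind (x : Filter ℕ+) (fun n => Filter.map (fun m => n * m) y) ↔ _
  simp only [Filter.mem_bind', Filter.mem_map]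
  rfl

noncomputable def Om (m : ℕ+) : ℕ := (m : ℕ).primeFactorsList.length

lemma Om_mul (a b : ℕ+) : Om (a * b) = Om a + Om b := by
  have h := Nat.perm_primeFactorsList_mul (a := (a:ℕ)) (b := (b:ℕ)) a.ne_zero b.ne_zero
  have := h.length_eq
  simpa [Om, PNat.mul_coe] using this

lemma mem_L {n : ℕ} {m : ℕ+} : m ∈ L n ↔ Om m = n := Iff.rfl

lemma L_zero : L 0 = {1} := by
  ext m
  simp only [mem_L, Om, Set.mem_singleton_iff, List.length_eq_zero_iff,
    Nat.primeFactorsList_eq_nil]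
  constructor
  · rintro (h | h)
    · exact absurd h m.ne_zero
    · exact PNat.coe_injective (by simpa using h)
  · rintro rfl; right; rfl

lemma eq_pure_one_of_L_zero {u : Ultrafilter ℕ+} (h : L 0 ∈ u) : u = pure 1 := by
  rw [L_zero] at h
  obtain ⟨a, ha, rfl⟩ := Ultrafilter.eq_pure_of_finite_mem (Set.finite_singleton 1) h
  simp at ha; rw [ha]

lemma umul_pure_one (x : Ultrafilter ℕ+) : umul x (pure 1) = x := by
  ext A
  simp [mem_umul, Ultrafilter.mem_pure]

lemma pure_one_umul (x : Ultrafilter ℕ+) : umul (pure 1) x = x := by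
  ext A
  simp [mem_umul, Ultrafilter.mem_pure]

lemma umul_assoc (x y z : Ultrafilter ℕ+) : umul (umul x y) z = umul x (umul y z) := by
  ext A
  simp only [mem_umul, Set.mem_setOf_eq, mul_assoc]

lemma foldr_umul (l : List (Ultrafilter ℕ+)) (c : Ultrafilter ℕ+) :
    l.foldr umul c = umul (l.foldr umul (pure 1)) c := by
  induction l with
  | nil => simp [pure_one_umul]
  | cons a l ih => simp [List.foldr_cons, ih, umul_assoc]

lemma L_mem_unique {u : Ultrafilter ℕ+} {k j : ℕ} (hk : L k ∈ u) (hj : L j ∈ u) : k = j := by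
  obtain ⟨m, hm1, hm2⟩ := Ultrafilter.nonempty_of_mem (Filter.inter_mem hk hj)
  rw [mem_L] at hm1 hm2; omega

lemma decompose {n : ℕ} {x u v : Ultrafilter ℕ+} (hx : L n ∈ x) (hxu : x = umul u v) :
    ∃ k, k ≤ n ∧ L k ∈ u ∧ L (n - k) ∈ v := by
  rw [hxu, mem_umul] at hx
  set S : Set ℕ+ := {a | {b | a * b ∈ L n} ∈ v} with hS
  -- S is covered by levels ≤ n
  have hcov : S ⊆ ⋃ k ∈ Set.Iic n, L k := by
    intro a ha
    obtain ⟨b, hb⟩ := Ultrafilter.nonempty_of_mem ha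
    have : Om a + Om b = n := by rw [← Om_mul]; exact hb
    simp only [Set.mem_iUnion, Set.mem_Iic]
    exact ⟨Om a, by omega, rfl⟩
  have hmem : (⋃ k ∈ Set.Iic n, L k) ∈ u := Filter.mem_of_superset hx hcov
  have : ∃ k ∈ Set.Iic n, L k ∈ u := by
    rwa [Ultrafilter.finite_biUnion_mem_iff (Set.finite_Iic n)] at hmem
  obtain ⟨k, hk, hLk⟩ := this
  refine ⟨k, hk, hLk, ?_⟩
  obtain ⟨a, haS, haL⟩ := Ultrafilter.nonempty_of_mem (Filter.inter_mem hx hLk)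
  have hka : Om a = k := haL
  have hv : {b | a * b ∈ L n} ∈ v := haS
  have hkn : k ≤ n := hk
  have : {b | a * b ∈ L n} = L (n - k) := by
    ext b
    simp only [Set.mem_setOf_eq, mem_L, Om_mul, hka]
    omega
  rwa [this] at hv

theorem stmt_7 (n : ℕ) (hn : 1 ≤ n) (x : Ultrafilter ℕ+) (hx : L n ∈ x) :
    ∃ l : List (Ultrafilter ℕ+), l ≠ [] ∧ (∀ p ∈ l, Irred p) ∧
      x = l.foldr umul (pure 1) := by
  induction n using Nat.strong_induction_on generalizing x with
  | _ n ih =>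
  have hxne : x ≠ pure 1 := by
    rintro rfl
    have h1 : (1 : ℕ+) ∈ L n := Ultrafilter.mem_pure.mp hx
    simp only [mem_L, Om, PNat.one_coe, Nat.primeFactorsList_one, List.length_nil] at h1
    omega
  by_cases hirr : Irred x
  · exact ⟨[x], by simp, by simpa using hirr, by simp [umul_pure_one]⟩
  · have hex : ∃ u v, x = umul u v ∧ u ≠ pure 1 ∧ v ≠ pure 1 := by
      rw [Irred, not_and] at hirr
      have h' := hirr hxne
      push_neg at h'
      exact h'
    obtain ⟨u, v, hxuv, hu, hv⟩ := hex
    obtain ⟨k, hkn, hLu, hLv⟩ := decompose hx hxuv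
    have hk1 : 1 ≤ k := by
      rcases Nat.eq_zero_or_pos k with h | h
      · exact absurd (eq_pure_one_of_L_zero (h ▸ hLu)) hu
      · exact h
    have hnk1 : 1 ≤ n - k := by
      rcases Nat.eq_zero_or_pos (n - k) with h | h
      · exact absurd (eq_pure_one_of_L_zero (h ▸ hLv)) hv
      · exact h
    obtain ⟨l1, hl1ne, hl1irr, hl1⟩ := ih k (by omega) hk1 u hLu
    obtain ⟨l2, hl2ne, hl2irr, hl2⟩ := ih (n - k) (by omega) hnk1 v hLv
    refine ⟨l1 ++ l2, by simp [hl1ne], ?_, ?_⟩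
    · intro p hp
      rcases List.mem_append.mp hp with h | h
      exacts [hl1irr p h, hl2irr p h]
    · rw [hxuv, List.foldr_append, ← hl2, foldr_umul, hl1]
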